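/- Let A = [[2,1],[1,1]] and B = [[3,5],[1,2]] in GL(2,ℤ), and let C^s = {(x,y)∈ℝ² : x<0<y or y<0<x} and C^u = {(x,y)∈ℝ² : 0<y<x or x<y<0}. Then: (i) A(C^u) ⊆ C^u and B(C^u) ⊆ C^u; (ii) A⁻¹(C^s) ⊆ C^s and B⁻¹(C^s) ⊆ C^s; (iii) there exists λ>1 such that ‖Av‖ ≥ λ‖v‖ and ‖Bv‖ ≥ λ‖v‖ for every v in the closure of C^u, and ‖A⁻¹v‖ ≥ λ‖v‖ and ‖B⁻¹v‖ ≥ λ‖v‖ for every v in the closure of C^s; (iv) the eigenline of A for its eigenvalue of absolute value greater than 1 is distinct from the corresponding eigenline of B, and the eigenline of A for its eigenvalue of absolute value less than 1 is distinct from the corresponding eigenline of B. -/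

import Mathlib

open Matrix

/-!
The closure of `C^u` lies in `{xy ≥ 0}` and that of `C^s` in `{xy ≤ 0}`. For a `2 × 2` matrix with
columns `c₀, c₁` one has `‖M (x, y)‖² = ‖c₀‖² x² + 2 ⟪c₀, c₁⟫ x y + ‖c₁‖² y²`; every column of
`A`, `B`, `A⁻¹`, `B⁻¹` has squared norm at least `2`, and `⟪c₀, c₁⟫` is positive for `A`, `B` and
negative for `A⁻¹`, `B⁻¹`, so all four expand the relevant cone by `√2`. A common eigenvector of
`A` and `B` would lie in the kernel of `AB - BA = !![-4, 4; 0, 4]`, which is invertible; hence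
no eigenline of `A` is an eigenline of `B`.
-/

/-- The matrix `A = [[2,1],[1,1]]`. -/
noncomputable def matA : Matrix (Fin 2) (Fin 2) ℝ := !![2, 1; 1, 1]

/-- The matrix `B = [[3,5],[1,2]]`. -/
noncomputable def matB : Matrix (Fin 2) (Fin 2) ℝ := !![3, 5; 1, 2]

/-- The stable cone `C^s = {(x,y) : x<0<y or y<0<x}`. -/
def coneS : Set (EuclideanSpace ℝ (Fin 2)) :=
  {v | (v 0 < 0 ∧ 0 < v 1) ∨ (v 1 < 0 ∧ 0 < v 0)}

/-- The unstable cone `C^u = {(x,y) : 0<y<x or x<y<0}`. -/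
def coneU : Set (EuclideanSpace ℝ (Fin 2)) :=
  {v | (0 < v 1 ∧ v 1 < v 0) ∨ (v 0 < v 1 ∧ v 1 < 0)}

theorem Matrix.eq_zero_of_mulVec_eq_smul_of_det_commutator_ne_zero {n R : Type*} [Fintype n]
    [DecidableEq n] [CommRing R] [NoZeroDivisors R] {M N : Matrix n n R}
    (hMN : (M * N - N * M).det ≠ 0) {v : n → R} {a b : R}
    (hM : M *ᵥ v = a • v) (hN : N *ᵥ v = b • v) : v = 0 := by
  refine eq_zero_of_mulVec_eq_zero hMN ?_
  rw [sub_mulVec, ← mulVec_mulVec, ← mulVec_mulVec, hM, hN, mulVec_smul, mulVec_smul, hM, hN,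
    smul_comm, sub_self]

theorem Matrix.span_singleton_ne_of_det_commutator_ne_zero {n 𝕜 : Type*} [Fintype n]
    [DecidableEq n] [RCLike 𝕜] {M N : Matrix n n 𝕜} (hMN : (M * N - N * M).det ≠ 0)
    {v w : EuclideanSpace 𝕜 n} {a b : 𝕜} (hv : v ≠ 0)
    (hMv : toEuclideanLin M v = a • v) (hNw : toEuclideanLin N w = b • w) :
    Submodule.span 𝕜 {v} ≠ Submodule.span 𝕜 {w} := by
  intro hspan
  have hwN : Submodule.span 𝕜 {w} ≤ Module.End.eigenspace (toEuclideanLin N) b :=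
    (Submodule.span_singleton_le_iff_mem _ _).mpr (Module.End.mem_eigenspace_iff.mpr hNw)
  have hNv : toEuclideanLin N v = b • v :=
    Module.End.mem_eigenspace_iff.mp (hwN (hspan ▸ Submodule.mem_span_singleton_self v))
  exact hv (WithLp.ofLp_injective 2 (eq_zero_of_mulVec_eq_smul_of_det_commutator_ne_zero hMN
    (congrArg WithLp.ofLp hMv) (congrArg WithLp.ofLp hNv)))

theorem Matrix.toEuclideanLin_of_fin_two_apply_zero (a b c d : ℝ) (v : EuclideanSpace ℝ (Fin 2)) :
    toEuclideanLin !![a, b; c, d] v 0 = a * v 0 + b * v 1 := by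
  simp [mulVec, dotProduct, Fin.sum_univ_two]

theorem Matrix.toEuclideanLin_of_fin_two_apply_one (a b c d : ℝ) (v : EuclideanSpace ℝ (Fin 2)) :
    toEuclideanLin !![a, b; c, d] v 1 = c * v 0 + d * v 1 := by
  simp [mulVec, dotProduct, Fin.sum_univ_two]

theorem Matrix.norm_sq_toEuclideanLin_of_fin_two (a b c d : ℝ) (v : EuclideanSpace ℝ (Fin 2)) :
    ‖toEuclideanLin !![a, b; c, d] v‖ ^ 2 =
      (a ^ 2 + c ^ 2) * v 0 ^ 2 + 2 * (a * b + c * d) * (v 0 * v 1)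
        + (b ^ 2 + d ^ 2) * v 1 ^ 2 := by
  rw [EuclideanSpace.real_norm_sq_eq, Fin.sum_univ_two, toEuclideanLin_of_fin_two_apply_zero,
    toEuclideanLin_of_fin_two_apply_one]
  ring

theorem Matrix.mul_norm_le_norm_toEuclideanLin_of_fin_two {a b c d l : ℝ} (hl : 0 ≤ l)
    (h₀ : l ^ 2 ≤ a ^ 2 + c ^ 2) (h₁ : l ^ 2 ≤ b ^ 2 + d ^ 2) {v : EuclideanSpace ℝ (Fin 2)}
    (hv : 0 ≤ (a * b + c * d) * (v 0 * v 1)) :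
    l * ‖v‖ ≤ ‖toEuclideanLin !![a, b; c, d] v‖ := by
  refine (pow_le_pow_iff_left₀ (by positivity) (norm_nonneg _) two_ne_zero).mp ?_
  rw [mul_pow, norm_sq_toEuclideanLin_of_fin_two, EuclideanSpace.real_norm_sq_eq, Fin.sum_univ_two]
  nlinarith [mul_le_mul_of_nonneg_right h₀ (sq_nonneg (v 0)),
    mul_le_mul_of_nonneg_right h₁ (sq_nonneg (v 1))]

theorem closure_coneU_subset : closure coneU ⊆ {v | 0 ≤ v 0 * v 1} := by
  refine closure_minimal ?_ (isClosed_le continuous_const (by fun_prop))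
  rintro v (⟨h₁, h₂⟩ | ⟨h₁, h₂⟩) <;> simp only [Set.mem_ofPred_eq] <;> nlinarith

theorem closure_coneS_subset : closure coneS ⊆ {v | v 0 * v 1 ≤ 0} := by
  refine closure_minimal ?_ (isClosed_le (by fun_prop) continuous_const)
  rintro v (⟨h₁, h₂⟩ | ⟨h₁, h₂⟩) <;> simp only [Set.mem_ofPred_eq] <;> nlinarith

theorem matA_inv : matA⁻¹ = !![1, -1; -1, 2] :=
  inv_eq_left_inv (by rw [matA, mul_fin_two, one_fin_two]; norm_num)

theorem matB_inv : matB⁻¹ = !![2, -5; -1, 3] :=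
  inv_eq_left_inv (by rw [matB, mul_fin_two, one_fin_two]; norm_num)

theorem det_commutator_matA_matB_ne_zero : (matA * matB - matB * matA).det ≠ 0 := by
  norm_num [matA, matB, mul_fin_two, det_fin_two]

theorem mapsTo_matA_coneU : Set.MapsTo (toEuclideanLin matA) coneU coneU := by
  rintro v (⟨h₁, h₂⟩ | ⟨h₁, h₂⟩) <;>
    simp only [coneU, Set.mem_ofPred_eq, matA, toEuclideanLin_of_fin_two_apply_zero,
      toEuclideanLin_of_fin_two_apply_one]
  exacts [Or.inl ⟨by linarith, by linarith⟩, Or.inr ⟨by linarith, by linarith⟩]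

theorem mapsTo_matB_coneU : Set.MapsTo (toEuclideanLin matB) coneU coneU := by
  rintro v (⟨h₁, h₂⟩ | ⟨h₁, h₂⟩) <;>
    simp only [coneU, Set.mem_ofPred_eq, matB, toEuclideanLin_of_fin_two_apply_zero,
      toEuclideanLin_of_fin_two_apply_one]
  exacts [Or.inl ⟨by linarith, by linarith⟩, Or.inr ⟨by linarith, by linarith⟩]

theorem mapsTo_matA_inv_coneS : Set.MapsTo (toEuclideanLin matA⁻¹) coneS coneS := by
  rintro v (⟨h₁, h₂⟩ | ⟨h₁, h₂⟩) <;>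
    simp only [coneS, Set.mem_ofPred_eq, matA_inv, toEuclideanLin_of_fin_two_apply_zero,
      toEuclideanLin_of_fin_two_apply_one]
  exacts [Or.inl ⟨by linarith, by linarith⟩, Or.inr ⟨by linarith, by linarith⟩]

theorem mapsTo_matB_inv_coneS : Set.MapsTo (toEuclideanLin matB⁻¹) coneS coneS := by
  rintro v (⟨h₁, h₂⟩ | ⟨h₁, h₂⟩) <;>
    simp only [coneS, Set.mem_ofPred_eq, matB_inv, toEuclideanLin_of_fin_two_apply_zero,
      toEuclideanLin_of_fin_two_apply_one]
  exacts [Or.inl ⟨by linarith, by linarith⟩, Or.inr ⟨by linarith, by linarith⟩]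

theorem sqrt_two_mul_norm_le_of_mem_closure_coneU {v : EuclideanSpace ℝ (Fin 2)}
    (hv : v ∈ closure coneU) :
    √2 * ‖v‖ ≤ ‖toEuclideanLin matA v‖ ∧ √2 * ‖v‖ ≤ ‖toEuclideanLin matB v‖ := by
  have hxy : 0 ≤ v 0 * v 1 := closure_coneU_subset hv
  have h2 : √2 ^ 2 = 2 := Real.sq_sqrt zero_le_two
  unfold matA matB
  exact ⟨mul_norm_le_norm_toEuclideanLin_of_fin_two (by positivity) (by norm_num [h2])
      (by norm_num [h2]) (mul_nonneg (by norm_num) hxy),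
    mul_norm_le_norm_toEuclideanLin_of_fin_two (by positivity) (by norm_num [h2])
      (by norm_num [h2]) (mul_nonneg (by norm_num) hxy)⟩

theorem sqrt_two_mul_norm_le_of_mem_closure_coneS {v : EuclideanSpace ℝ (Fin 2)}
    (hv : v ∈ closure coneS) :
    √2 * ‖v‖ ≤ ‖toEuclideanLin matA⁻¹ v‖ ∧ √2 * ‖v‖ ≤ ‖toEuclideanLin matB⁻¹ v‖ := by
  have hxy : v 0 * v 1 ≤ 0 := closure_coneS_subset hv
  have h2 : √2 ^ 2 = 2 := Real.sq_sqrt zero_le_two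
  rw [matA_inv, matB_inv]
  exact ⟨mul_norm_le_norm_toEuclideanLin_of_fin_two (by positivity) (by norm_num [h2])
      (by norm_num [h2]) (mul_nonneg_of_nonpos_of_nonpos (by norm_num) hxy),
    mul_norm_le_norm_toEuclideanLin_of_fin_two (by positivity) (by norm_num [h2])
      (by norm_num [h2]) (mul_nonneg_of_nonpos_of_nonpos (by norm_num) hxy)⟩

/-- For `A = [[2,1],[1,1]]` and `B = [[3,5],[1,2]]` acting on the Euclidean
plane: (i) both preserve the unstable cone `C^u`; (ii) their inverses preserve the stable cone
`C^s`; (iii) there is `λ>1` such that `A` and `B` expand every vector in the closure of `C^u`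
by a factor at least `λ`, and `A⁻¹`, `B⁻¹` expand every vector in the closure of `C^s` by at
least `λ`; (iv) the unstable eigenlines of `A` and `B` are distinct, and their stable
eigenlines are distinct. -/
theorem linear_example_cone_conditions :
    (∀ v ∈ coneU, Matrix.toEuclideanLin matA v ∈ coneU ∧
      Matrix.toEuclideanLin matB v ∈ coneU) ∧
    (∀ v ∈ coneS, Matrix.toEuclideanLin matA⁻¹ v ∈ coneS ∧
      Matrix.toEuclideanLin matB⁻¹ v ∈ coneS) ∧
    (∃ lam : ℝ, 1 < lam ∧
      (∀ v ∈ closure coneU, lam * ‖v‖ ≤ ‖Matrix.toEuclideanLin matA v‖ ∧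
        lam * ‖v‖ ≤ ‖Matrix.toEuclideanLin matB v‖) ∧
      (∀ v ∈ closure coneS, lam * ‖v‖ ≤ ‖Matrix.toEuclideanLin matA⁻¹ v‖ ∧
        lam * ‖v‖ ≤ ‖Matrix.toEuclideanLin matB⁻¹ v‖)) ∧
    (∀ (aA aB : ℝ) (vA vB : EuclideanSpace ℝ (Fin 2)), vA ≠ 0 → vB ≠ 0 →
      Matrix.toEuclideanLin matA vA = aA • vA → Matrix.toEuclideanLin matB vB = aB • vB →
      ((1 < |aA| ∧ 1 < |aB|) ∨ (|aA| < 1 ∧ |aB| < 1)) →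
      Submodule.span ℝ {vA} ≠ Submodule.span ℝ {vB}) :=
  ⟨fun _ hv => ⟨mapsTo_matA_coneU hv, mapsTo_matB_coneU hv⟩,
    fun _ hv => ⟨mapsTo_matA_inv_coneS hv, mapsTo_matB_inv_coneS hv⟩,
    ⟨√2, Real.one_lt_sqrt_two, fun _ => sqrt_two_mul_norm_le_of_mem_closure_coneU,
      fun _ => sqrt_two_mul_norm_le_of_mem_closure_coneS⟩,
    fun _ _ _ _ hvA _ hA hB _ =>
      span_singleton_ne_of_det_commutator_ne_zero det_commutator_matA_matB_ne_zero hvA hA hB⟩
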